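/- arXiv:2404.17564 — 6 statements merged into one kernel-verified Lean document; each statement's English description precedes it below -/
import Mathlib

section
/- Let G be a finite connected graph, K a clique of G whose removal disconnects G (a clique separator), and X the union of some of the connected components of G − K. Then X ∪ K is monophonically convex. -/
open Classical

variable {V : Type*}

namespace Paper

def mInterval (G : SimpleGraph V) (u v : V) : Set V :=
  {w | ∃ p : G.Walk u v, p.IsPath ∧ p.toSubgraph.IsInduced ∧ w ∈ p.support}

def MConvex (G : SimpleGraph V) (C : Set V) : Prop :=
  ∀ u ∈ C, ∀ v ∈ C, mInterval G u v ⊆ C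

def mHull (G : SimpleGraph V) (X : Set V) : Set V :=
  ⋂₀ {C | MConvex G C ∧ X ⊆ C}

def mIntervalSet (G : SimpleGraph V) (Z : Set V) : Set V :=
  ⋃ u ∈ Z, ⋃ v ∈ Z, mInterval G u v

def Sep (G : SimpleGraph V) (A B : Set V) : Prop :=
  ∃ H : Set V, MConvex G H ∧ MConvex G Hᶜ ∧ A ⊆ H ∧ B ⊆ Hᶜ

def nbhd (G : SimpleGraph V) (X : Set V) : Set V :=
  {v | v ∉ X ∧ ∃ x ∈ X, G.Adj x v}

def cnbhd (G : SimpleGraph V) (X : Set V) : Set V := X ∪ nbhd G X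

def front (G : SimpleGraph V) (X Y : Set V) : Set V := X ∩ cnbhd G Y

def IsClique (G : SimpleGraph V) (K : Set V) : Prop :=
  ∀ u ∈ K, ∀ v ∈ K, u ≠ v → G.Adj u v

def shadow (G : SimpleGraph V) (A B : Set V) : Set V :=
  {v | (mHull G (B ∪ {v}) ∩ A).Nonempty}

def Forbidden (G : SimpleGraph V) (A B X : Set V) : Prop :=
  X ⊆ (A ∪ B)ᶜ ∧ (mHull G X ∩ A).Nonempty ∧ (mHull G X ∩ B).Nonempty

def MFS (G : SimpleGraph V) (A B : Set V) : Set (Set V) :=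
  {X | Forbidden G A B X ∧ ∀ Y, Y ⊂ X → ¬ Forbidden G A B Y}

def presat (G : SimpleGraph V) (A B : Set V) : Set V :=
  mHull G (shadow G A B ∪ ⋃ X ∈ MFS G A B, ⋂ x ∈ X, mHull G (A ∪ {x}))

def Linked (G : SimpleGraph V) (A B : Set V) : Prop :=
  ∃ a ∈ A, ∃ b ∈ B, G.Adj a b

def Saturated (G : SimpleGraph V) (A B : Set V) : Prop :=
  A = presat G A B ∧ B = presat G B A

def IsCompOf (G : SimpleGraph V) (W S : Set V) : Prop :=
  S.Nonempty ∧ S ⊆ W ∧ (G.induce S).Connected ∧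
    ∀ T, S ⊆ T → T ⊆ W → (G.induce T).Connected → T = S

def Eqv (G : SimpleGraph V) (A B : Set V) (u v : V) : Prop :=
  u = v ∨ ∃ L : List (Set V), L ≠ [] ∧
    (∀ S ∈ L, IsCompOf G (cnbhd G (A ∪ B))ᶜ S) ∧
    List.Chain' (fun S T => (nbhd G S ∩ nbhd G T).Nonempty) L ∧
    (∃ S₀ ∈ L.head?, u ∈ cnbhd G S₀) ∧
    (∃ Sₖ ∈ L.getLast?, v ∈ cnbhd G Sₖ)

end Paper

open Paper

/-!
If every vertex of `C` with a neighbour outside `C` lies in a clique `K`, then an induced path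
with both ends in `C` that left `C` would exit through a vertex of `K` and re-enter through
another one; these two are adjacent, so the path would have a chord. For `C = X ∪ K` the
hypothesis holds because a component of `G - K` has no neighbours outside itself and `K`.
-/

namespace Paper

variable {G : SimpleGraph V}

lemma IsCompOf.mem_of_adj {W S : Set V} (hS : IsCompOf G W S) {x y : V} (hx : x ∈ S)
    (hxy : G.Adj x y) (hy : y ∈ W) : y ∈ S := by
  obtain ⟨-, hSW, hSconn, hmax⟩ := hS
  have hconn : (G.induce (S ∪ {y})).Connected :=
    SimpleGraph.connected_induce_union hSconn.preconnected .of_subsingleton hx rfl hxy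
  rw [← hmax _ Set.subset_union_left (Set.union_subset hSW (by simpa using hy)) hconn]
  exact Or.inr rfl

lemma MConvex.of_boundary_subset_clique {K C : Set V} (hK : IsClique G K)
    (hC : ∀ x ∈ C, ∀ y ∉ C, G.Adj x y → x ∈ K) : MConvex G C := by
  rintro u hu v hv w ⟨p, hp, hind, hw⟩
  by_contra hwC
  obtain ⟨q, r, rfl⟩ := p.mem_support_iff_exists_append.mp hw
  obtain ⟨d, hdq, hdC, hdC'⟩ := q.exists_boundary_dart C hu hwC
  obtain ⟨e, her, heC, heC'⟩ := r.reverse.exists_boundary_dart C hv hwC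
  have hx : d.fst ∈ q.support := q.dart_fst_mem_support_of_mem_darts hdq
  have hy : e.fst ∈ r.support := by
    simpa using r.reverse.dart_fst_mem_support_of_mem_darts her
  have hxy : d.fst ≠ e.fst :=
    hp.ne_of_mem_support_of_append (ne_of_mem_of_not_mem heC hwC) hx hy
  have hadj : G.Adj d.fst e.fst :=
    hK _ (hC _ hdC _ hdC' d.adj) _ (hC _ heC _ heC' e.adj) hxy
  have hchord := (SimpleGraph.Walk.isInduced_toSubgraph.mp hind).mem_edges
    (by simp [hx]) (by simp [hy]) hadj
  rw [SimpleGraph.Walk.edges_append, List.mem_append] at hchord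
  rcases hchord with hchord | hchord
  · exact hp.ne_of_mem_support_of_append (ne_of_mem_of_not_mem heC hwC)
      (q.snd_mem_support_of_mem_edges hchord) hy rfl
  · exact hp.ne_of_mem_support_of_append (ne_of_mem_of_not_mem hdC hwC)
      hx (r.fst_mem_support_of_mem_edges hchord) rfl

end Paper

theorem stmt_3_general (G : SimpleGraph V)
    (K : Set V) (hK : IsClique G K)
    (X : Set V) (comps : Set (Set V)) (hcomps : ∀ S ∈ comps, IsCompOf G Kᶜ S)
    (hX : X = ⋃₀ comps) :
    MConvex G (X ∪ K) := by
  subst hX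
  refine MConvex.of_boundary_subset_clique hK ?_
  rintro x (⟨S, hS, hxS⟩ | hxK) y hy hxy
  · exact absurd (Or.inl ⟨S, hS, (hcomps S hS).mem_of_adj hxS hxy (hy <| Or.inr ·)⟩) hy
  · exact hxK

theorem stmt_3 [Fintype V] (G : SimpleGraph V) (hG : G.Connected)
    (K : Set V) (hK : IsClique G K) (hsep : ¬ (G.induce Kᶜ).Preconnected)
    (X : Set V) (comps : Set (Set V)) (hcomps : ∀ S ∈ comps, IsCompOf G Kᶜ S)
    (hX : X = ⋃₀ comps) :
    MConvex G (X ∪ K) :=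
  stmt_3_general G K hK X comps hcomps hX
end

section
/- Let G be a finite connected graph, A, B nonempty disjoint monophonically convex subsets of V(G), a ∈ A, b ∈ B, and a = v₁, …, v_k = b a shortest a–b path. Then A and B are separable by monophonic half-spaces if and only if there exists 1 ≤ i < k such that cl(A ∪ {v₁, …, v_i}) and cl(B ∪ {v_{i+1}, …, v_k}) are separable by monophonic half-spaces. -/
open Classical

variable {V : Type*}

open Paper

/-! A shortest path is chordless, and a chordless path between two vertices of a monophonically
convex set lies inside it. Hence, for a half-space `H ⊇ A` with `B ⊆ Hᶜ`, the vertices of the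
path lying in `H` form an initial segment `v₁, …, vᵢ` with `1 ≤ i < k`, and `H` also separates
the two hulls. Conversely, a separator of the hulls separates the smaller sets `A` and `B`. -/

namespace SimpleGraph.Walk

variable {G : SimpleGraph V} {u v w : V}

theorem isChordless_of_forall_length_le {p : G.Walk u v}
    (hp : ∀ q : G.Walk u v, p.length ≤ q.length) : p.IsChordless := by
  have shortcut : ∀ i j, j ≤ p.length → G.Adj (p.getVert i) (p.getVert j) → j ≤ i + 1 := by
    intro i j hj hadj
    have := hp ((p.take i).append (cons hadj (p.drop j)))
    simp only [length_append, take_length, length_cons, drop_length] at this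
    omega
  rw [isChordless_iff_forall_mem_edges]
  intro x y hx hy hxy
  obtain ⟨i, rfl, hi⟩ := mem_support_iff_exists_getVert.1 hx
  obtain ⟨j, rfl, hj⟩ := mem_support_iff_exists_getVert.1 hy
  have hij : i ≠ j := by rintro rfl; exact hxy.ne rfl
  have := shortcut i j hj hxy
  have := shortcut j i hi hxy.symm
  rw [mk_mem_edges_iff_exists]
  obtain rfl | rfl : j = i + 1 ∨ i = j + 1 := by omega
  · exact ⟨i, by omega, rfl⟩
  · exact ⟨j, by omega, Sym2.eq_swap⟩

theorem IsChordless.of_append_left {p : G.Walk u v} {q : G.Walk v w}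
    (hpq : (p.append q).IsPath) (h : (p.append q).IsChordless) : p.IsChordless := by
  rw [isChordless_iff_forall_mem_edges] at h ⊢
  intro x y hx hy hxy
  have hjunction : ∀ z ∈ p.support, z ∈ q.support → z = v := fun z hzp hzq => by
    by_contra hzv
    exact hpq.ne_of_mem_support_of_append hzv hzp hzq rfl
  rcases List.mem_append.1 (edges_append p q ▸ h (by simp [hx]) (by simp [hy]) hxy) with he | he
  · exact he
  · have hxv := hjunction x hx (q.fst_mem_support_of_mem_edges he)
    have hyv := hjunction y hy (q.snd_mem_support_of_mem_edges he)
    exact absurd (hxv.trans hyv.symm) hxy.ne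

theorem IsChordless.take {p : G.Walk u v} (hp : p.IsPath) (h : p.IsChordless) (n : ℕ) :
    (p.take n).IsChordless := by
  rw [← p.append_take_drop_eq n] at hp h
  exact h.of_append_left hp

end SimpleGraph.Walk

theorem List.exists_take_drop_of_prefix_closed {α : Type*} {P : α → Prop} {l : List α}
    (h : ∀ l₁ y l₂, l = l₁ ++ y :: l₂ → P y → ∀ x ∈ l₁, P x) :
    ∃ i, (∀ x ∈ l.take i, P x) ∧ ∀ x ∈ l.drop i, ¬ P x := by
  induction l with
  | nil => exact ⟨0, by simp, by simp⟩
  | cons x t ih =>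
    by_cases hx : P x
    · obtain ⟨i, htake, hdrop⟩ := ih fun l₁ y l₂ ht hy z hz =>
        h (x :: l₁) y l₂ (by rw [ht, cons_append]) hy z (mem_cons_of_mem x hz)
      refine ⟨i + 1, ?_, by simpa using hdrop⟩
      simpa [hx] using htake
    · refine ⟨0, by simp, ?_⟩
      rintro y (_ | ⟨_, hy⟩) hPy
      · exact hx hPy
      · obtain ⟨s, r, rfl⟩ := append_of_mem hy
        exact hx (h (x :: s) y r (by rw [cons_append]) hPy x mem_cons_self)

namespace Paper

variable {G : SimpleGraph V}

theorem subset_mHull (X : Set V) : X ⊆ mHull G X :=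
  fun _ hx => Set.mem_sInter.2 fun _ hC => hC.2 hx

theorem MConvex.mHull_subset {C X : Set V} (hC : MConvex G C) (hXC : X ⊆ C) :
    mHull G X ⊆ C :=
  Set.sInter_subset_of_mem ⟨hC, hXC⟩

theorem MConvex.mem_of_mem_support {H : Set V} (hH : MConvex G H) {u v x : V} {p : G.Walk u v}
    (hp : p.IsPath) (hc : p.IsChordless) (hu : u ∈ H) (hv : v ∈ H) (hx : x ∈ p.support) : x ∈ H :=
  hH u hu v hv ⟨p, hp, SimpleGraph.Walk.isInduced_toSubgraph.2 hc, hx⟩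

theorem MConvex.exists_take_drop {H : Set V} (hH : MConvex G H) {a b : V} {p : G.Walk a b}
    (hp : p.IsPath) (hc : p.IsChordless) (ha : a ∈ H) :
    ∃ i, (∀ x ∈ p.support.take i, x ∈ H) ∧ ∀ x ∈ p.support.drop i, x ∉ H := by
  refine List.exists_take_drop_of_prefix_closed fun l₁ y l₂ hsupp hy x hx => ?_
  have hlen : l₁.length ≤ p.length := by
    have := congrArg List.length hsupp
    simp only [SimpleGraph.Walk.length_support, List.length_append, List.length_cons] at this
    omega
  have hy' : p.getVert l₁.length = y := by
    simp [p.getVert_eq_support_getElem hlen, hsupp]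
  refine hH.mem_of_mem_support (hp.take _) (hc.take hp _) ha (hy' ▸ hy) ?_
  rw [SimpleGraph.Walk.support_take, hsupp, List.take_length_add_append]
  exact List.mem_append_left _ hx

end Paper

theorem stmt_5_general (G : SimpleGraph V)
    (A B : Set V)
    (a b : V) (ha : a ∈ A) (hb : b ∈ B)
    (p : G.Walk a b) (hp : p.IsPath)
    (hshort : ∀ q : G.Walk a b, p.length ≤ q.length) :
    Sep G A B ↔ ∃ i, 1 ≤ i ∧ i < p.support.length ∧
      Sep G (mHull G (A ∪ {x | x ∈ p.support.take i}))
            (mHull G (B ∪ {x | x ∈ p.support.drop i})) := by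
  constructor
  · rintro ⟨H, hH, hHc, hAH, hBH⟩
    obtain ⟨i, htake, hdrop⟩ :=
      hH.exists_take_drop hp (SimpleGraph.Walk.isChordless_of_forall_length_le hshort) (hAH ha)
    refine ⟨i, ?_, ?_, H, hH, hHc, hH.mHull_subset ?_, hHc.mHull_subset ?_⟩
    · by_contra! hi
      exact hdrop a (by simp [Nat.lt_one_iff.1 hi]) (hAH ha)
    · by_contra! hi
      exact hBH hb (htake b (by simp [List.take_of_length_le hi]))
    · exact Set.union_subset hAH htake
    · exact Set.union_subset hBH hdrop
  · rintro ⟨i, -, -, H, hH, hHc, hAH, hBH⟩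
    exact ⟨H, hH, hHc, (Set.subset_union_left.trans (subset_mHull _)).trans hAH,
      (Set.subset_union_left.trans (subset_mHull _)).trans hBH⟩

theorem stmt_5 [Fintype V] (G : SimpleGraph V) (hG : G.Connected)
    (A B : Set V) (hA : A.Nonempty) (hB : B.Nonempty) (hAB : Disjoint A B)
    (hAc : MConvex G A) (hBc : MConvex G B)
    (a b : V) (ha : a ∈ A) (hb : b ∈ B)
    (p : G.Walk a b) (hp : p.IsPath)
    (hshort : ∀ q : G.Walk a b, p.length ≤ q.length) :
    Sep G A B ↔ ∃ i, 1 ≤ i ∧ i < p.support.length ∧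
      Sep G (mHull G (A ∪ {x | x ∈ p.support.take i}))
            (mHull G (B ∪ {x | x ∈ p.support.drop i})) :=
  stmt_5_general G A B a b ha hb p hp hshort
end

section
/- Let G be a finite connected graph, A and B monophonically convex subsets of V(G) that are linked (some a ∈ A and b ∈ B are adjacent). Then A and B are separable by monophonic half-spaces if and only if σ(A, B) and σ(B, A) are separable by monophonic half-spaces, where σ(A, B) = cl( (A / B) ∪ ⋃ { ⋂_{x ∈ X} cl(A ∪ {x}) : X ∈ MFS(A, B) } ). -/
open Classical

variable {V : Type*}

open Paper

lemma subset_mHull (G : SimpleGraph V) (X : Set V) : X ⊆ mHull G X :=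
  fun _ hv => Set.mem_sInter.2 fun _ hC => hC.2 hv

lemma mHull_min {G : SimpleGraph V} {X C : Set V} (hC : MConvex G C) (hX : X ⊆ C) :
    mHull G X ⊆ C := fun _ hv => Set.mem_sInter.1 hv C ⟨hC, hX⟩

lemma subset_presat (G : SimpleGraph V) (A B : Set V) : A ⊆ presat G A B :=
  fun a ha => subset_mHull G _ (Or.inl ⟨a, subset_mHull G _ (Or.inr rfl), ha⟩)

lemma presat_subset {G : SimpleGraph V} {A B H : Set V}
    (hH : MConvex G H) (hHc : MConvex G Hᶜ) (hAH : A ⊆ H) (hBH : B ⊆ Hᶜ) :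
    presat G A B ⊆ H := by
  apply mHull_min hH
  rintro v (hv | hv)
  · by_contra hvH
    obtain ⟨a, haH, haA⟩ := hv
    have hsub : mHull G (B ∪ {v}) ⊆ Hᶜ := mHull_min hHc (by
      rintro y (h | h)
      · exact hBH h
      · simpa [Set.mem_singleton_iff.1 h] using hvH)
    exact hsub haH (hAH haA)
  · simp only [Set.mem_iUnion] at hv
    obtain ⟨X, hX, hvX⟩ := hv
    obtain ⟨a, haHull, haA⟩ := hX.1.2.1
    have hXH : (X ∩ H).Nonempty := by
      by_contra h
      have hXc : X ⊆ Hᶜ := fun x hx hxH => h ⟨x, hx, hxH⟩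
      exact (mHull_min hHc hXc haHull) (hAH haA)
    obtain ⟨x, hxX, hxH⟩ := hXH
    have hsub : mHull G (A ∪ {x}) ⊆ H := mHull_min hH (by
      rintro y (h | h)
      · exact hAH h
      · rwa [Set.mem_singleton_iff.1 h])
    simp only [Set.mem_iInter] at hvX
    exact hsub (hvX x hxX)

theorem stmt_6 [Fintype V] (G : SimpleGraph V) (hG : G.Connected)
    (A B : Set V) (hAc : MConvex G A) (hBc : MConvex G B)
    (hL : Linked G A B) :
    Sep G A B ↔ Sep G (presat G A B) (presat G B A) := by
  constructor
  · rintro ⟨H, hH, hHc, hAH, hBH⟩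
    refine ⟨H, hH, hHc, presat_subset hH hHc hAH hBH, ?_⟩
    exact presat_subset hHc (by rwa [compl_compl]) hBH (by rw [compl_compl]; exact hAH)
  · rintro ⟨H, hH, hHc, hAH, hBH⟩
    exact ⟨H, hH, hHc, (subset_presat G A B).trans hAH, (subset_presat G B A).trans hBH⟩
end

section
/- Let G be a finite connected graph, C ⊆ V(G) a monophonically convex set, and u, v ∈ V(G) \ C distinct adjacent vertices. If F(C, {u}) \ F(C, {v}) ≠ ∅, then u ∈ cl(C ∪ {v}). -/
open Classical

variable {V : Type*}

open Paper

namespace Paper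

variable {G : SimpleGraph V}

theorem mem_cnbhd_singleton {u w : V} : w ∈ cnbhd G {u} ↔ w = u ∨ G.Adj u w := by
  simp only [cnbhd, nbhd, Set.mem_union, Set.mem_singleton_iff, Set.mem_ofPred_eq, exists_eq_left]
  by_cases h : w = u <;> simp [h]

theorem mInterval_subset_mHull {X : Set V} {a c : V} (ha : a ∈ X) (hc : c ∈ X) :
    mInterval G a c ⊆ mHull G X :=
  fun _ hx _ ⟨hD, hXD⟩ => hD a (hXD ha) c (hXD hc) hx

theorem mem_mInterval_of_adj_of_not_adj {a b c : V} (hab : G.Adj a b) (hbc : G.Adj b c)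
    (hac : a ≠ c) (hnac : ¬ G.Adj a c) : b ∈ mInterval G a c := by
  refine ⟨.cons hab (.cons hbc .nil), ?_, ?_, by simp⟩
  · simp [SimpleGraph.Walk.isPath_def, hab.ne, hbc.ne, hac]
  · have hnca : ¬ G.Adj c a := fun h => hnac h.symm
    intro x hx y hy hxy
    simp only [SimpleGraph.Walk.mem_verts_toSubgraph, SimpleGraph.Walk.support_cons,
      SimpleGraph.Walk.support_nil, List.mem_cons, List.not_mem_nil, or_false] at hx hy
    rw [SimpleGraph.Walk.adj_toSubgraph_iff_mem_edges]
    rcases hx with rfl | rfl | rfl <;> rcases hy with rfl | rfl | rfl <;>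
      simp_all [Sym2.eq_swap]

end Paper

theorem stmt_9_general (G : SimpleGraph V) (C : Set V) (u v : V) (hadj : G.Adj u v)
    (hF : (front G C {u} \ front G C {v}).Nonempty) :
    u ∈ mHull G (C ∪ {v}) := by
  obtain ⟨w, ⟨hwC, hwu⟩, hwv⟩ := hF
  obtain ⟨hwv_ne, hvw⟩ := not_or.1 fun h => hwv ⟨hwC, mem_cnbhd_singleton.2 h⟩
  have huw : G.Adj u w := (mem_cnbhd_singleton.1 hwu).resolve_left <| by
    rintro rfl
    exact hvw hadj.symm
  have hmid : u ∈ mInterval G v w :=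
    mem_mInterval_of_adj_of_not_adj hadj.symm huw (Ne.symm hwv_ne) hvw
  exact mInterval_subset_mHull (Set.mem_union_right C (Set.mem_singleton v))
    (Set.mem_union_left _ hwC) hmid

theorem stmt_9 [Fintype V] (G : SimpleGraph V) (hG : G.Connected)
    (C : Set V) (hC : MConvex G C) (u v : V) (hu : u ∉ C) (hv : v ∉ C)
    (huv : u ≠ v) (hadj : G.Adj u v)
    (hF : (front G C {u} \ front G C {v}).Nonempty) :
    u ∈ mHull G (C ∪ {v}) :=
  stmt_9_general G C u v hadj hF
end

section
/- Let G be a finite connected graph, and A, B linked, disjoint, saturated subsets of V(G). Let S be a connected component of G − N[A ∪ B]. Then for every v ∈ S, N(S) ⊆ cl(A ∪ {v}) ∩ cl(B ∪ {v}) ∩ N(A ∪ B). -/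
open Classical

variable {V : Type*}

open Paper

/-
A neighbour `z` of the component `S` lies in `N(A ∪ B)`, since otherwise `S ∪ {z}` would be a larger
connected set avoiding `N[A ∪ B]`; pick `w ∈ A ∪ B` adjacent to `z`. Saturated sets are convex, and
convex sets of a connected graph are connected, so with the link between `A` and `B` the set
`U = S ∪ {z, w} ∪ A ∪ B` is connected, and `z` is the only vertex of `U` outside `S` adjacent to `S`.
A shortest path inside `U` from `v` to a vertex of `A` (or `B`) is induced and has to leave `S`
through `z`, so `z` lies in the hull of `A ∪ {v}` (resp. `B ∪ {v}`).
-/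

namespace SimpleGraph

variable {G : SimpleGraph V}

theorem reachable_induce_iff {s : Set V} {u v : V} (hu : u ∈ s) (hv : v ∈ s) :
    (G.induce s).Reachable ⟨u, hu⟩ ⟨v, hv⟩ ↔ ∃ p : G.Walk u v, ∀ x ∈ p.support, x ∈ s := by
  constructor
  · rintro ⟨p⟩
    refine ⟨p.map (Embedding.induce s).toHom, fun x hx => ?_⟩
    obtain ⟨y, -, rfl⟩ := List.mem_map.mp (Walk.support_map _ p ▸ hx)
    exact y.2
  · rintro ⟨p, hp⟩
    exact ⟨p.induce s hp⟩

namespace Walk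

theorem mem_edges_of_length_le_one {u v : V} (p : G.Walk u v) (hp : p.length ≤ 1) (huv : u ≠ v) :
    s(u, v) ∈ p.edges := by
  match p with
  | nil => exact absurd rfl huv
  | cons _ nil => simp
  | cons _ (cons _ _) => simp at hp

theorem isChordless_of_forall_length_le_s14 {U : Set V} {x y : V} (p : G.Walk x y)
    (hmin : ∀ q : G.Walk x y, (∀ w ∈ q.support, w ∈ U) → p.length ≤ q.length)
    (hp : ∀ w ∈ p.support, w ∈ U) : p.IsChordless := by
  refine isChordless_iff_forall_mem_edges.mpr fun a b ha hb hab => ?_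
  obtain ⟨q, r, rfl⟩ := mem_support_iff_exists_append.mp ha
  rw [mem_support_append_iff] at hb
  rcases hb with hb | hb
  · obtain ⟨q₁, q₂, rfl⟩ := mem_support_iff_exists_append.mp hb
    have := hmin (q₁.append (cons hab.symm r)) fun w hw => by
      simp only [mem_support_append_iff, support_cons, List.mem_cons] at hw hp
      grind [end_mem_support]
    simp only [length_append, length_cons] at this
    rw [Sym2.eq_swap]
    simp only [edges_append, List.mem_append]
    exact Or.inl (Or.inr (q₂.mem_edges_of_length_le_one (by omega) hab.ne.symm))
  · obtain ⟨r₁, r₂, rfl⟩ := mem_support_iff_exists_append.mp hb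
    have := hmin (q.append (cons hab r₂)) fun w hw => by
      simp only [mem_support_append_iff, support_cons, List.mem_cons] at hw hp
      grind [start_mem_support]
    simp only [length_append, length_cons] at this
    simp only [edges_append, List.mem_append]
    exact Or.inr (Or.inl (r₁.mem_edges_of_length_le_one (by omega) hab.ne))

end Walk

theorem exists_isPath_isChordless_of_walk (U : Set V) {x y : V} (p : G.Walk x y)
    (hp : ∀ w ∈ p.support, w ∈ U) :
    ∃ q : G.Walk x y, q.IsPath ∧ q.IsChordless ∧ ∀ w ∈ q.support, w ∈ U := by
  obtain ⟨q, hqU, hmin⟩ := (measure fun q : G.Walk x y => q.length).wf.has_min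
    {q | ∀ w ∈ q.support, w ∈ U} ⟨p, hp⟩
  have hmin' : ∀ r : G.Walk x y, (∀ w ∈ r.support, w ∈ U) → q.length ≤ r.length :=
    fun r hr => not_lt.mp (hmin r hr)
  have hbU : ∀ w ∈ q.bypass.support, w ∈ U := fun w hw => hqU w (q.support_bypass_subset_support hw)
  exact ⟨q.bypass, q.bypass_isPath, q.bypass.isChordless_of_forall_length_le_s14
    (fun r hr => q.length_bypass_le_length.trans (hmin' r hr)) hbU, hbU⟩

end SimpleGraph

open SimpleGraph

namespace Paper

variable {G : SimpleGraph V}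

theorem mConvex_mHull (X : Set V) : MConvex G (mHull G X) :=
  fun _ hu _ hv _ hw C hC => hC.1 _ (hu C hC) _ (hv C hC) hw

theorem mInterval_subset_mHull_s14 {X : Set V} {u v : V} (hu : u ∈ X) (hv : v ∈ X) :
    mInterval G u v ⊆ mHull G X :=
  fun _ hw _ hC => hC.1 u (hC.2 hu) v (hC.2 hv) hw

theorem Saturated.mConvex_left {A B : Set V} (h : Saturated G A B) : MConvex G A :=
  h.1 ▸ mConvex_mHull _

theorem Saturated.mConvex_right {A B : Set V} (h : Saturated G A B) : MConvex G B :=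
  h.2 ▸ mConvex_mHull _

theorem MConvex.preconnected_induce (hG : G.Connected) {C : Set V} (hC : MConvex G C) :
    (G.induce C).Preconnected := by
  rintro ⟨u, hu⟩ ⟨v, hv⟩
  obtain ⟨p, hp, hc, -⟩ := exists_isPath_isChordless_of_walk Set.univ (hG u v).some fun _ _ => trivial
  exact (reachable_induce_iff hu hv).mpr
    ⟨p, fun w hw => hC u hu v hv ⟨p, hp, Walk.isInduced_toSubgraph.mpr hc, hw⟩⟩

theorem Linked.connected_induce_union (hG : G.Connected) {A B : Set V} (hL : Linked G A B)
    (hA : MConvex G A) (hB : MConvex G B) : (G.induce (A ∪ B)).Connected := by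
  obtain ⟨a, ha, b, hb, hab⟩ := hL
  exact SimpleGraph.connected_induce_union (hA.preconnected_induce hG) (hB.preconnected_induce hG) ha hb hab

theorem mem_mInterval_of_nbhd_inter_subset {S U : Set V} {x y z : V}
    (hU : (G.induce U).Preconnected) (hxU : x ∈ U) (hyU : y ∈ U) (hx : x ∈ S) (hy : y ∉ S)
    (hsep : nbhd G S ∩ U ⊆ {z}) : z ∈ mInterval G x y := by
  obtain ⟨p₀, hp₀⟩ := (reachable_induce_iff hxU hyU).mp (hU _ _)
  obtain ⟨p, hp, hc, hpU⟩ := exists_isPath_isChordless_of_walk U p₀ hp₀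
  obtain ⟨d, hd, hdS, hdS'⟩ := p.exists_boundary_dart S hx hy
  have hd' : d.snd ∈ p.support := p.dart_snd_mem_support_of_mem_darts hd
  have : d.snd = z := hsep ⟨⟨hdS', d.fst, hdS, d.adj⟩, hpU _ hd'⟩
  exact ⟨p, hp, Walk.isInduced_toSubgraph.mpr hc, this ▸ hd'⟩

theorem disjoint_nbhd_of_subset_compl_cnbhd {S X : Set V} (h : S ⊆ (cnbhd G X)ᶜ) :
    Disjoint (nbhd G S) X := by
  refine Set.disjoint_left.mpr fun u ⟨_, s, hs, hsu⟩ hu => h hs ?_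
  by_cases hsX : s ∈ X
  · exact Or.inl hsX
  · exact Or.inr ⟨hsX, u, hu, hsu.symm⟩

theorem IsCompOf.nbhd_subset_compl {W S : Set V} (h : IsCompOf G W S) : nbhd G S ⊆ Wᶜ := by
  obtain ⟨-, hSW, hS, hmax⟩ := h
  rintro z ⟨hzS, s, hs, hsz⟩ hzW
  have hsub : S ∪ {s, z} ⊆ W := Set.union_subset hSW (Set.insert_subset (hSW hs) (by simpa))
  have := hmax _ Set.subset_union_left hsub (induce_union_connected hS.preconnected
    (induce_pair_connected_of_adj hsz).preconnected ⟨s, hs, Set.mem_insert s _⟩)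
  exact hzS (this ▸ Or.inr (by simp))

end Paper

theorem stmt_14_general (G : SimpleGraph V) (hG : G.Connected)
    (A B : Set V) (hL : Linked G A B)
    (hS : Saturated G A B)
    (S : Set V) (hcomp : IsCompOf G (cnbhd G (A ∪ B))ᶜ S)
    (v : V) (hv : v ∈ S) :
    nbhd G S ⊆ mHull G (A ∪ {v}) ∩ mHull G (B ∪ {v}) ∩ nbhd G (A ∪ B) := by
  intro z hz
  have hdisj : ∀ ⦃u⦄, u ∈ nbhd G S → u ∉ A ∪ B :=
    Set.disjoint_left.mp (disjoint_nbhd_of_subset_compl_cnbhd hcomp.2.1)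
  have hzN : z ∈ nbhd G (A ∪ B) :=
    (compl_compl (cnbhd G (A ∪ B)) ▸ hcomp.nbhd_subset_compl hz).resolve_left (hdisj hz)
  obtain ⟨s, hs, hsz⟩ := hz.2
  obtain ⟨w, hw, hwz⟩ := hzN.2
  set U := S ∪ {z, w} ∪ (A ∪ B)
  have hU : (G.induce U).Connected := induce_union_connected
    (connected_induce_union hcomp.2.2.1.preconnected
      (induce_pair_connected_of_adj hwz.symm).preconnected hs (Set.mem_insert z _) hsz).preconnected
    (hL.connected_induce_union hG hS.mConvex_left hS.mConvex_right).preconnected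
    ⟨w, Or.inr (by simp), hw⟩
  have hsep : nbhd G S ∩ U ⊆ {z} := by
    rintro u ⟨hu, (huS | huz | huw) | huAB⟩
    · exact absurd huS hu.1
    · exact huz
    · exact absurd (Set.mem_singleton_iff.mp huw ▸ hw) (hdisj hu)
    · exact absurd huAB (hdisj hu)
  have key : ∀ x ∈ A ∪ B, z ∈ mInterval G v x := fun x hx =>
    mem_mInterval_of_nbhd_inter_subset hU.preconnected (Or.inl (Or.inl hv)) (Or.inr hx) hv
      (fun hxS => hcomp.2.1 hxS (Or.inl hx)) hsep
  obtain ⟨a, ha, b, hb, -⟩ := hL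
  exact ⟨⟨mInterval_subset_mHull_s14 (X := A ∪ {v}) (Or.inr rfl) (Or.inl ha) (key a (Or.inl ha)),
    mInterval_subset_mHull_s14 (X := B ∪ {v}) (Or.inr rfl) (Or.inl hb) (key b (Or.inr hb))⟩, hzN⟩

theorem stmt_14 [Fintype V] (G : SimpleGraph V) (hG : G.Connected)
    (A B : Set V) (hL : Linked G A B) (hd : Disjoint A B)
    (hS : Saturated G A B)
    (S : Set V) (hcomp : IsCompOf G (cnbhd G (A ∪ B))ᶜ S)
    (v : V) (hv : v ∈ S) :
    nbhd G S ⊆ mHull G (A ∪ {v}) ∩ mHull G (B ∪ {v}) ∩ nbhd G (A ∪ B) :=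
  stmt_14_general G hG A B hL hS S hcomp v hv
end

section
/- Half-space separation is NP-hard for finite convexity spaces given by a polynomial-time hull oracle, even restricted to spaces of Carathéodory number 3. Concretely: for a 3-uniform hypergraph H with vertex set V(H), define V' = V(H) ∪ {a, b} and the closure operator h(X) = X ∪ {a, b} if X contains a hyperedge of H, and h(X) = X otherwise. Then h is a closure operator whose lattice of closed sets forms a convexity space with Carathéodory number 3, and {a} and {b} are half-space separable in this space if and only if V(H) admits a partition into two independent sets of H. -/
/-!
A set is closed exactly when it contains both apexes `a`, `b` as soon as it contains a
hyperedge. So if `H` is a half-space with `a ∈ H` and `b ∉ H`, neither `H` nor its complement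
contains a hyperedge, and their traces on `V(H)` form a 2-colouring; conversely a 2-colouring
`V(H) = I ⊔ J` yields the half-space `I ∪ {a}`. An apex lies in the hull of a hyperedge but not
in the hull of any proper subset of it, which makes the Carathéodory number exactly 3.
-/

open Classical

open Set

section HyperedgeClosure

variable {γ : Type*}

def hyperedgeClosure (F : Set (Set γ)) (T : Set γ) : ClosureOperator (Set γ) :=
  .mk' (fun X => if ∃ e ∈ F, e ⊆ X then X ∪ T else X)
    (fun X Y hXY => by
      by_cases hX : ∃ e ∈ F, e ⊆ X
      · have hY : ∃ e ∈ F, e ⊆ Y := let ⟨e, he, heX⟩ := hX; ⟨e, he, heX.trans hXY⟩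
        simpa only [if_pos hX, if_pos hY] using union_subset_union_left T hXY
      · simp only [if_neg hX]
        split_ifs
        exacts [hXY.trans subset_union_left, hXY])
    (fun X => by split_ifs; exacts [subset_union_left, subset_rfl])
    (fun X => by
      by_cases hX : ∃ e ∈ F, e ⊆ X
      · have hXT : ∃ e ∈ F, e ⊆ X ∪ T :=
          let ⟨e, he, heX⟩ := hX; ⟨e, he, heX.trans subset_union_left⟩
        simp only [if_pos hX, if_pos hXT, union_assoc, union_self, subset_rfl]
      · simp only [if_neg hX, subset_rfl])

variable {F : Set (Set γ)} {T X : Set γ}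

theorem hyperedgeClosure_apply :
    hyperedgeClosure F T X = if ∃ e ∈ F, e ⊆ X then X ∪ T else X := rfl

theorem hyperedgeClosure_eq_self_iff :
    hyperedgeClosure F T X = X ↔ ((∃ e ∈ F, e ⊆ X) → T ⊆ X) := by
  rw [hyperedgeClosure_apply]
  split_ifs with hX <;> simp [hX]

theorem hyperedgeClosure_eq_self_iff_of_not_subset (hT : ¬ T ⊆ X) :
    hyperedgeClosure F T X = X ↔ ∀ e ∈ F, ¬ e ⊆ X := by
  simp only [hyperedgeClosure_eq_self_iff, hT, imp_false, not_exists, not_and]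

theorem hyperedgeClosure_empty (hF : ∀ e ∈ F, e.Nonempty) : hyperedgeClosure F T ∅ = ∅ :=
  hyperedgeClosure_eq_self_iff.2 fun ⟨e, he, he0⟩ =>
    absurd (subset_empty_iff.1 he0) (hF e he).ne_empty

theorem hyperedgeClosure_image_eq_self_iff {α : Type*} {f : α → γ} {E : Set (Set α)}
    (hT : ¬ T ⊆ X) :
    hyperedgeClosure (image f '' E) T X = X ↔ ∀ e ∈ E, ¬ e ⊆ f ⁻¹' X := by
  simp only [hyperedgeClosure_eq_self_iff_of_not_subset hT, forall_mem_image, image_subset_iff]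

def HasCaratheodoryNumberLE (cl : Set γ → Set γ) (d : ℕ) : Prop :=
  ∀ X v, v ∈ cl X → ∃ Y ⊆ X, Y.ncard ≤ d ∧ v ∈ cl Y

theorem hasCaratheodoryNumberLE_hyperedgeClosure {d : ℕ} (hd : 1 ≤ d)
    (hF : ∀ e ∈ F, e.ncard ≤ d) : HasCaratheodoryNumberLE (hyperedgeClosure F T) d := by
  intro X v hv
  by_cases hvX : v ∈ X
  · exact ⟨{v}, singleton_subset_iff.2 hvX, by rwa [ncard_singleton],
      (hyperedgeClosure F T).le_closure _ (mem_singleton v)⟩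
  rw [hyperedgeClosure_apply] at hv
  split_ifs at hv with hX
  · obtain ⟨e, he, heX⟩ := hX
    refine ⟨e, heX, hF e he, ?_⟩
    rw [hyperedgeClosure_apply, if_pos ⟨e, he, subset_rfl⟩]
    exact .inr (hv.resolve_left hvX)
  · exact absurd hv hvX

theorem not_hasCaratheodoryNumberLE_hyperedgeClosure {d : ℕ} {e : Set γ} {v : γ} (he : e ∈ F)
    (he_fin : e.Finite) (hv : v ∈ T) (hve : v ∉ e) (hF : ∀ f ∈ F, d < f.ncard) :
    ¬ HasCaratheodoryNumberLE (hyperedgeClosure F T) d := by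
  intro hcar
  have hv_cl : v ∈ hyperedgeClosure F T e := by
    rw [hyperedgeClosure_apply, if_pos ⟨e, he, subset_rfl⟩]
    exact .inr hv
  obtain ⟨Y, hYe, hYd, hvY⟩ := hcar e v hv_cl
  rw [hyperedgeClosure_apply] at hvY
  split_ifs at hvY with hY
  · obtain ⟨f, hf, hfY⟩ := hY
    have := ncard_le_ncard hfY (he_fin.subset hYe)
    exact absurd (hF f hf) (by omega)
  · exact hve (hYe hvY)

end HyperedgeClosure

theorem ClosureOperator.closure_inf_eq {α : Type*} [SemilatticeInf α] (c : ClosureOperator α)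
    {x y : α} (hx : c x = x) (hy : c y = y) : c (x ⊓ y) = x ⊓ y :=
  le_antisymm ((c.closure_inf_le x y).trans_eq (by rw [hx, hy])) (c.le_closure _)

theorem exists_halfSpace_iff_twoColorable {α : Type*} (E : Set (Set α)) :
    (∃ H, hyperedgeClosure (image Sum.inl '' E) {Sum.inr true, Sum.inr false} H = H ∧
        hyperedgeClosure (image Sum.inl '' E) {Sum.inr true, Sum.inr false} Hᶜ = Hᶜ ∧
        Sum.inr true ∈ H ∧ Sum.inr false ∈ Hᶜ) ↔
      ∃ I J : Set α, I ∪ J = univ ∧ I ∩ J = ∅ ∧ (∀ e ∈ E, ¬ e ⊆ I) ∧ (∀ e ∈ E, ¬ e ⊆ J) := by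
  constructor
  · rintro ⟨H, hH, hHc, haH, hbH⟩
    have hTH : ¬ {Sum.inr true, Sum.inr false} ⊆ H := fun hT => hbH (pair_subset_iff.1 hT).2
    have hTHc : ¬ {Sum.inr true, Sum.inr false} ⊆ Hᶜ := fun hT => (pair_subset_iff.1 hT).1 haH
    exact ⟨Sum.inl ⁻¹' H, (Sum.inl ⁻¹' H)ᶜ, union_compl_self _, inter_compl_self _,
      (hyperedgeClosure_image_eq_self_iff hTH).1 hH,
      (hyperedgeClosure_image_eq_self_iff hTHc).1 hHc⟩
  · rintro ⟨I, J, hIJ, hIJ', hI, hJ⟩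
    obtain rfl : J = Iᶜ := (compl_eq_iff_isCompl.2 (.of_eq hIJ' hIJ)).symm
    set H := Sum.inl '' I ∪ {Sum.inr true}
    have hTH : ¬ {Sum.inr true, Sum.inr false} ⊆ H := by simp [H]
    have hTHc : ¬ {Sum.inr true, Sum.inr false} ⊆ Hᶜ := by simp [pair_subset_iff, H]
    have hpre : Sum.inl ⁻¹' H = I := by ext; simp [H]
    refine ⟨H, ?_, ?_, by simp [H], by simp [H]⟩
    · rwa [hyperedgeClosure_image_eq_self_iff hTH, hpre]
    · rwa [hyperedgeClosure_image_eq_self_iff hTHc, preimage_compl, hpre]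

theorem stmt_18_general {α : Type*} [Fintype α]
    (E : Set (Set α)) (hE : E.Nonempty) (h3 : ∀ e ∈ E, e.ncard = 3)
    (a b : α ⊕ Bool) (ha : a = Sum.inr true) (hb : b = Sum.inr false)
    (h : Set (α ⊕ Bool) → Set (α ⊕ Bool))
    (hh : ∀ X, h X = if ∃ e ∈ E, Sum.inl '' e ⊆ X then X ∪ {a, b} else X) :
    ((∀ X, X ⊆ h X) ∧ (∀ X Y, X ⊆ Y → h X ⊆ h Y) ∧ (∀ X, h (h X) = h X)) ∧
    (h ∅ = ∅ ∧ h Set.univ = Set.univ ∧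
      ∀ X Y, h X = X → h Y = Y → h (X ∩ Y) = X ∩ Y) ∧
    ((∀ (X : Set (α ⊕ Bool)) (v : α ⊕ Bool), v ∈ h X →
        ∃ Y ⊆ X, Y.ncard ≤ 3 ∧ v ∈ h Y) ∧
      ¬ (∀ (X : Set (α ⊕ Bool)) (v : α ⊕ Bool), v ∈ h X →
        ∃ Y ⊆ X, Y.ncard ≤ 2 ∧ v ∈ h Y)) ∧
    ((∃ H : Set (α ⊕ Bool), h H = H ∧ h Hᶜ = Hᶜ ∧ a ∈ H ∧ b ∈ Hᶜ) ↔
      ∃ I J : Set α, I ∪ J = Set.univ ∧ I ∩ J = ∅ ∧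
        (∀ e ∈ E, ¬ e ⊆ I) ∧ (∀ e ∈ E, ¬ e ⊆ J)) := by
  subst ha hb
  set F := image Sum.inl '' E
  obtain rfl : h = hyperedgeClosure F {Sum.inr true, Sum.inr false} :=
    funext fun X => by simp only [hh, hyperedgeClosure_apply, F, exists_mem_image]
  have hF : ∀ f ∈ F, f.ncard = 3 := by
    rintro _ ⟨e, he, rfl⟩
    rw [ncard_image_of_injective e Sum.inl_injective, h3 e he]
  obtain ⟨e, he⟩ := hE
  have heF : Sum.inl '' e ∈ F := mem_image_of_mem _ he
  set c := hyperedgeClosure F {Sum.inr true, Sum.inr false}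
  refine ⟨⟨c.le_closure, fun _ _ hXY => c.monotone hXY, c.idempotent⟩,
    ⟨hyperedgeClosure_empty fun f hf => nonempty_of_ncard_ne_zero (by rw [hF f hf]; norm_num),
      c.closure_top, fun _ _ => c.closure_inf_eq⟩,
    ⟨hasCaratheodoryNumberLE_hyperedgeClosure (by norm_num) fun f hf => (hF f hf).le,
      not_hasCaratheodoryNumberLE_hyperedgeClosure (v := Sum.inr true) heF
        (finite_of_ncard_ne_zero (by rw [hF _ heF]; norm_num)) (by simp) (by simp)
        fun f hf => by rw [hF f hf]; norm_num⟩, exists_halfSpace_iff_twoColorable E⟩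

theorem stmt_18 {α : Type*} [Fintype α] [DecidableEq α]
    (E : Set (Set α)) (hE : E.Nonempty) (h3 : ∀ e ∈ E, e.ncard = 3)
    (a b : α ⊕ Bool) (ha : a = Sum.inr true) (hb : b = Sum.inr false)
    (h : Set (α ⊕ Bool) → Set (α ⊕ Bool))
    (hh : ∀ X, h X = if ∃ e ∈ E, Sum.inl '' e ⊆ X then X ∪ {a, b} else X) :
    ((∀ X, X ⊆ h X) ∧ (∀ X Y, X ⊆ Y → h X ⊆ h Y) ∧ (∀ X, h (h X) = h X)) ∧
    (h ∅ = ∅ ∧ h Set.univ = Set.univ ∧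
      ∀ X Y, h X = X → h Y = Y → h (X ∩ Y) = X ∩ Y) ∧
    ((∀ (X : Set (α ⊕ Bool)) (v : α ⊕ Bool), v ∈ h X →
        ∃ Y ⊆ X, Y.ncard ≤ 3 ∧ v ∈ h Y) ∧
      ¬ (∀ (X : Set (α ⊕ Bool)) (v : α ⊕ Bool), v ∈ h X →
        ∃ Y ⊆ X, Y.ncard ≤ 2 ∧ v ∈ h Y)) ∧
    ((∃ H : Set (α ⊕ Bool), h H = H ∧ h Hᶜ = Hᶜ ∧ a ∈ H ∧ b ∈ Hᶜ) ↔
      ∃ I J : Set α, I ∪ J = Set.univ ∧ I ∩ J = ∅ ∧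
        (∀ e ∈ E, ¬ e ⊆ I) ∧ (∀ e ∈ E, ¬ e ⊆ J)) :=
  stmt_18_general E hE h3 a b ha hb h hh
end
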